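/- arXiv:2308.09252 — 4 statements merged into one kernel-verified Lean document; each statement's English description precedes it below -/
import Mathlib

section
/- For bounded linear operators B and C on a complex Hilbert space H, w_e(B,C)² ≥ (1/2) · w(BC + CB). -/
/-!
Since `(B + C)² - (B - C)² = 2 (BC + CB)`, it suffices to bound the numerical radius of
`(B ± C)²` by `2 w_e(B, C)²`. This follows from `w(B ± C) ≤ √2 w_e(B, C)` and the power
inequality `w(T²) ≤ w(T)²`. For the latter, rotate `T` by a unimodular scalar so that
`⟪T² x, x⟫ ≥ 0`; then `4 ‖(Re T) x‖² = ‖T x‖² + ‖T† x‖² + 2 ⟪T² x, x⟫ ≥ 4 ⟪T² x, x⟫`,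
while `‖Re T‖ ≤ w(T)` because `Re T` is self-adjoint.
-/

open ContinuousLinearMap

noncomputable def nr {E : Type*} [NormedAddCommGroup E] [InnerProductSpace ℂ E]
    (T : E →L[ℂ] E) : ℝ :=
  sSup {r : ℝ | ∃ x : E, ‖x‖ = 1 ∧ r = ‖(inner ℂ (T x) x : ℂ)‖}

noncomputable def er {E : Type*} [NormedAddCommGroup E] [InnerProductSpace ℂ E]
    (B C : E →L[ℂ] E) : ℝ :=
  sSup {r : ℝ | ∃ x : E, ‖x‖ = 1 ∧
    r = Real.sqrt (‖(inner ℂ (B x) x : ℂ)‖ ^ 2 + ‖(inner ℂ (C x) x : ℂ)‖ ^ 2)}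

open scoped InnerProductSpace ComplexStarModule
open RCLike

theorem Real.add_le_sqrt_two_mul_sqrt (a b : ℝ) : a + b ≤ √2 * √(a ^ 2 + b ^ 2) := by
  rw [← Real.sqrt_mul zero_le_two]
  exact (le_abs_self _).trans (Real.abs_le_sqrt (by nlinarith [sq_nonneg (a - b)]))

theorem Complex.exists_norm_eq_one_sq_mul_eq_norm (z : ℂ) :
    ∃ c : ℂ, ‖c‖ = 1 ∧ c ^ 2 * z = ‖z‖ := by
  rcases eq_or_ne z 0 with rfl | hz
  · exact ⟨1, by simp⟩
  obtain ⟨c, hc⟩ := IsAlgClosed.exists_pow_nat_eq (starRingEnd ℂ z / ‖z‖) two_pos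
  have hz' : (‖z‖ : ℂ) ≠ 0 := by simpa using hz
  refine ⟨c, ?_, ?_⟩
  · have : ‖c‖ ^ 2 = 1 := by
      rw [← norm_pow, hc, norm_div, Complex.norm_conj, Complex.norm_real, norm_norm,
        div_self (norm_ne_zero_iff.2 hz)]
    exact (pow_eq_one_iff_of_nonneg (norm_nonneg c) two_ne_zero).1 this
  · rw [hc, div_mul_eq_mul_div, Complex.conj_mul', div_eq_iff hz']
    ring

namespace ContinuousLinearMap

section RCLike

variable {𝕜 E : Type*} [RCLike 𝕜] [NormedAddCommGroup E] [InnerProductSpace 𝕜 E]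

theorem norm_inner_apply_self_le (T : E →L[𝕜] E) (x : E) : ‖⟪T x, x⟫_𝕜‖ ≤ ‖T‖ * ‖x‖ ^ 2 :=
  calc ‖⟪T x, x⟫_𝕜‖ ≤ ‖T x‖ * ‖x‖ := norm_inner_le_norm _ _
    _ ≤ ‖T‖ * ‖x‖ * ‖x‖ := by gcongr; exact T.le_opNorm x
    _ = ‖T‖ * ‖x‖ ^ 2 := by ring

theorem opNorm_le_of_abs_re_inner_self_le {T : E →L[𝕜] E} (hT : (T : E →ₗ[𝕜] E).IsSymmetric)
    {r : ℝ} (hr : 0 ≤ r) (h : ∀ x, ‖x‖ = 1 → |re ⟪T x, x⟫_𝕜| ≤ r) : ‖T‖ ≤ r := by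
  rw [T.norm_eq_iSup_rayleighQuotient hT]
  refine ciSup_le fun x => ?_
  rcases eq_or_ne x 0 with rfl | hx
  · simpa using hr
  have hu := norm_smul_inv_norm (𝕜 := 𝕜) hx
  rw [← T.rayleigh_smul x (c := (‖x‖⁻¹ : 𝕜)) (by simpa using hx), rayleighQuotient,
    reApplyInnerSelf_apply, hu, one_pow, div_one]
  exact h _ hu

end RCLike

variable {H : Type*} [NormedAddCommGroup H] [InnerProductSpace ℂ H] [CompleteSpace H]

theorem re_inner_realPart_apply_self (S : H →L[ℂ] H) (x : H) :
    re ⟪(ℜ S : H →L[ℂ] H) x, x⟫_ℂ = re ⟪S x, x⟫_ℂ := by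
  rw [realPart_apply_coe, star_eq_adjoint, smul_apply, add_apply, inner_smul_left_eq_smul,
    inner_add_left, adjoint_inner_left, RCLike.smul_re, map_add, inner_re_symm x]
  ring

theorem norm_add_re_inner_mul_self_apply_self_le (S : H →L[ℂ] H) (x : H) :
    ‖⟪(S * S) x, x⟫_ℂ‖ + re ⟪(S * S) x, x⟫_ℂ ≤ 2 * ‖(ℜ S : H →L[ℂ] H) x‖ ^ 2 := by
  have hinner : ⟪(S * S) x, x⟫_ℂ = ⟪S x, adjoint S x⟫_ℂ := (adjoint_inner_right S (S x) x).symm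
  have hnorm : ‖(ℜ S : H →L[ℂ] H) x‖ = 2⁻¹ * ‖S x + adjoint S x‖ := by
    rw [realPart_apply_coe, star_eq_adjoint, smul_apply, add_apply, norm_smul,
      Real.norm_of_nonneg (by norm_num)]
  have hcs := norm_inner_le_norm (𝕜 := ℂ) (S x) (adjoint S x)
  rw [hinner, hnorm, mul_pow, norm_add_sq (𝕜 := ℂ)]
  nlinarith [sq_nonneg (‖S x‖ - ‖adjoint S x‖)]

theorem norm_inner_mul_self_apply_self_le {T : H →L[ℂ] H} {r : ℝ}
    (hT : ∀ y, ‖y‖ = 1 → ‖⟪T y, y⟫_ℂ‖ ≤ r) {x : H} (hx : ‖x‖ = 1) :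
    ‖⟪(T * T) x, x⟫_ℂ‖ ≤ r ^ 2 := by
  have hr : 0 ≤ r := (norm_nonneg _).trans (hT x hx)
  obtain ⟨c, hc, hcz⟩ := Complex.exists_norm_eq_one_sq_mul_eq_norm ⟪(T * T) x, x⟫_ℂ
  set S := starRingEnd ℂ c • T
  have hS y (hy : ‖y‖ = 1) : |re ⟪(ℜ S : H →L[ℂ] H) y, y⟫_ℂ| ≤ r := by
    rw [re_inner_realPart_apply_self]
    refine (abs_re_le_norm _).trans ?_
    simpa [S, inner_smul_left, hc] using hT y hy
  have hSS : ⟪(S * S) x, x⟫_ℂ = c ^ 2 * ⟪(T * T) x, x⟫_ℂ := by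
    rw [smul_mul_smul_comm, smul_apply, inner_smul_left, map_mul, Complex.conj_conj, sq]
  have hP : ‖(ℜ S : H →L[ℂ] H) x‖ ≤ r := by
    simpa [hx] using le_of_opNorm_le _
      (opNorm_le_of_abs_re_inner_self_le (ℜ S).2.isSymmetric hr hS) x
  have key := norm_add_re_inner_mul_self_apply_self_le S x
  rw [hSS, hcz, Complex.norm_real, norm_norm, RCLike.re_to_complex, Complex.ofReal_re] at key
  linarith [pow_le_pow_left₀ (norm_nonneg _) hP 2]

end ContinuousLinearMap

section EuclideanOperatorRadius

variable {E : Type*} [NormedAddCommGroup E] [InnerProductSpace ℂ E]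

theorem nr_le {T : E →L[ℂ] E} {r : ℝ} (hr : 0 ≤ r) (h : ∀ x, ‖x‖ = 1 → ‖⟪T x, x⟫_ℂ‖ ≤ r) :
    nr T ≤ r :=
  Real.sSup_le (by rintro _ ⟨x, hx, rfl⟩; exact h x hx) hr

theorem sqrt_le_er (B C : E →L[ℂ] E) {x : E} (hx : ‖x‖ = 1) :
    √(‖⟪B x, x⟫_ℂ‖ ^ 2 + ‖⟪C x, x⟫_ℂ‖ ^ 2) ≤ er B C := by
  refine le_csSup ⟨‖B‖ + ‖C‖, ?_⟩ ⟨x, hx, rfl⟩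
  rintro _ ⟨y, hy, rfl⟩
  have hB := B.norm_inner_apply_self_le y
  have hC := C.norm_inner_apply_self_le y
  rw [hy, one_pow, mul_one] at hB hC
  rw [Real.sqrt_le_left (by positivity)]
  nlinarith [norm_nonneg ⟪B y, y⟫_ℂ, norm_nonneg ⟪C y, y⟫_ℂ]

theorem norm_le_sqrt_two_mul_er {B C : E →L[ℂ] E} {x : E} (hx : ‖x‖ = 1) {z : ℂ}
    (hz : ‖z‖ ≤ ‖⟪B x, x⟫_ℂ‖ + ‖⟪C x, x⟫_ℂ‖) : ‖z‖ ≤ √2 * er B C :=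
  hz.trans <| (Real.add_le_sqrt_two_mul_sqrt _ _).trans <|
    mul_le_mul_of_nonneg_left (sqrt_le_er B C hx) (Real.sqrt_nonneg 2)

end EuclideanOperatorRadius

theorem stmt_3 {H : Type*} [NormedAddCommGroup H] [InnerProductSpace ℂ H] [CompleteSpace H]
    (B C : H →L[ℂ] H) :
    (er B C) ^ 2 ≥ (1 / 2) * nr (B * C + C * B) := by
  have hadd x (hx : ‖x‖ = 1) : ‖⟪(B + C) x, x⟫_ℂ‖ ≤ √2 * er B C :=
    norm_le_sqrt_two_mul_er hx (by rw [add_apply, inner_add_left]; exact norm_add_le _ _)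
  have hsub x (hx : ‖x‖ = 1) : ‖⟪(B - C) x, x⟫_ℂ‖ ≤ √2 * er B C :=
    norm_le_sqrt_two_mul_er hx (by rw [sub_apply, inner_sub_left]; exact norm_sub_le _ _)
  have hsq : (√2 * er B C) ^ 2 = 2 * er B C ^ 2 := by rw [mul_pow, Real.sq_sqrt zero_le_two]
  have hpolar : (B + C) * (B + C) - (B - C) * (B - C) = (2 : ℂ) • (B * C + C * B) := by
    rw [two_smul]; noncomm_ring
  have hanti x (hx : ‖x‖ = 1) : ‖⟪(B * C + C * B) x, x⟫_ℂ‖ ≤ 2 * er B C ^ 2 := by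
    have h := norm_sub_le ⟪((B + C) * (B + C)) x, x⟫_ℂ ⟪((B - C) * (B - C)) x, x⟫_ℂ
    rw [← inner_sub_left, ← sub_apply, hpolar, smul_apply, inner_smul_left, map_ofNat, norm_mul,
      Complex.norm_two] at h
    linarith [norm_inner_mul_self_apply_self_le hadd hx, norm_inner_mul_self_apply_self_le hsub hx]
  linarith [nr_le (by positivity) hanti]
end

section
/- For a bounded linear operator T on a complex Hilbert space H, w(T)² ≥ (1/8)·‖T*T + TT*‖ + (1/8)·(‖Re(T)+Im(T)‖² + ‖Re(T)−Im(T)‖²) + (1/4)·|‖Re(T)+Im(T)‖² − ‖Re(T)−Im(T)‖²|. -/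
open ContinuousLinearMap

/-!
Write `A = Re T`, `B = Im T`. Since `T*T + TT* = 2(A² + B²) = (A + B)² + (A - B)²`, we have
`‖T*T + TT*‖ ≤ ‖A + B‖² + ‖A - B‖²`, so the right-hand side is at most
`max (‖A + B‖², ‖A - B‖²) / 2`. The operators `A ± B` are self-adjoint, so their norms are
their numerical radii, and `⟨(A ± B)x, x⟩` is real with absolute value
`|Re⟨Tx, x⟩ ∓ Im⟨Tx, x⟩| ≤ √2 |⟨Tx, x⟩|`. Hence `‖A ± B‖² ≤ 2 w(T)²`.
-/

open ComplexStarModule Complex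

lemma realPart_apply_coe_complex {A : Type*} [AddCommGroup A] [Module ℂ A] [StarAddMonoid A]
    [StarModule ℂ A] (a : A) : (ℜ a : A) = (2 : ℂ)⁻¹ • (a + star a) := by
  rw [realPart_apply_coe, ← Complex.coe_smul]
  norm_num

lemma imaginaryPart_apply_coe_complex {A : Type*} [AddCommGroup A] [Module ℂ A] [StarAddMonoid A]
    [StarModule ℂ A] (a : A) : (ℑ a : A) = (2 * I)⁻¹ • (a - star a) := by
  rw [imaginaryPart_apply_coe, ← Complex.coe_smul, smul_smul]
  congr 1
  field_simp
  simp

lemma star_mul_self_add_self_mul_star_eq_mul_self_add_mul_self {A : Type*}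
    [NonUnitalNonAssocRing A] [StarRing A] [Module ℂ A] [IsScalarTower ℂ A A]
    [SMulCommClass ℂ A A] [StarModule ℂ A] (a : A) :
    star a * a + a * star a = (ℜ a + ℑ a : A) * (ℜ a + ℑ a) + (ℜ a - ℑ a : A) * (ℜ a - ℑ a) := by
  rw [star_mul_self_add_self_mul_star]
  noncomm_ring

lemma norm_mul_self_add_mul_self_le {R : Type*} [NonUnitalSeminormedRing R] (a b : R) :
    ‖a * a + b * b‖ ≤ ‖a‖ ^ 2 + ‖b‖ ^ 2 :=
  calc ‖a * a + b * b‖ ≤ ‖a * a‖ + ‖b * b‖ := norm_add_le _ _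
    _ ≤ ‖a‖ * ‖a‖ + ‖b‖ * ‖b‖ := by gcongr <;> exact norm_mul_le _ _
    _ = ‖a‖ ^ 2 + ‖b‖ ^ 2 := by ring

lemma abs_re_add_im_le (z : ℂ) : |z.re + z.im| ≤ √2 * ‖z‖ := by
  rw [← Real.sqrt_sq (norm_nonneg z), ← Real.sqrt_mul zero_le_two]
  apply Real.abs_le_sqrt
  rw [Complex.sq_norm, Complex.normSq_apply]
  nlinarith [sq_nonneg (z.re - z.im)]

lemma abs_re_sub_im_le (z : ℂ) : |z.re - z.im| ≤ √2 * ‖z‖ := by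
  simpa [sub_eq_add_neg] using abs_re_add_im_le (starRingEnd ℂ z)

lemma ContinuousLinearMap.norm_le_of_abs_re_inner_le {𝕜 E : Type*} [RCLike 𝕜]
    [NormedAddCommGroup E] [InnerProductSpace 𝕜 E] {S : E →L[𝕜] E}
    (hS : (S : E →ₗ[𝕜] E).IsSymmetric) {M : ℝ} (hM : 0 ≤ M)
    (h : ∀ x, |RCLike.re (inner 𝕜 (S x) x)| ≤ M * ‖x‖ ^ 2) : ‖S‖ ≤ M := by
  rw [S.norm_eq_iSup_rayleighQuotient hS]
  refine ciSup_le fun x ↦ ?_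
  rw [rayleighQuotient, reApplyInnerSelf_apply, abs_div, abs_sq]
  exact div_le_of_le_mul₀ (sq_nonneg _) hM (h x)

section NumericalRadius

variable {E : Type*} [NormedAddCommGroup E] [InnerProductSpace ℂ E] (T : E →L[ℂ] E)

lemma bddAbove_nr : BddAbove {r : ℝ | ∃ x : E, ‖x‖ = 1 ∧ r = ‖(inner ℂ (T x) x : ℂ)‖} := by
  refine ⟨‖T‖, ?_⟩
  rintro r ⟨x, hx, rfl⟩
  calc ‖inner ℂ (T x) x‖ ≤ ‖T x‖ * ‖x‖ := norm_inner_le_norm _ _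
    _ ≤ ‖T‖ * ‖x‖ * ‖x‖ := by gcongr; exact T.le_opNorm x
    _ = ‖T‖ := by rw [hx, mul_one, mul_one]

lemma nr_nonneg : 0 ≤ nr T :=
  Real.sSup_nonneg fun _ ⟨_, _, hr⟩ ↦ hr ▸ norm_nonneg _

lemma norm_inner_le_nr {x : E} (hx : ‖x‖ = 1) : ‖inner ℂ (T x) x‖ ≤ nr T :=
  le_csSup (bddAbove_nr T) ⟨x, hx, rfl⟩

lemma norm_inner_le_nr_mul_sq (x : E) : ‖inner ℂ (T x) x‖ ≤ nr T * ‖x‖ ^ 2 := by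
  rcases eq_or_ne x 0 with rfl | hx
  · simp
  have hx' : 0 < ‖x‖ := norm_pos_iff.2 hx
  have hu : ‖((‖x‖⁻¹ : ℝ) : ℂ) • x‖ = 1 := by simp [norm_smul, hx'.ne']
  have := norm_inner_le_nr T hu
  rwa [map_smul, inner_smul_left, inner_smul_right, norm_mul, norm_mul, norm_conj, norm_real,
    norm_inv, norm_norm, ← mul_assoc, ← sq, inv_pow, inv_mul_le_iff₀ (by positivity),
    mul_comm] at this

end NumericalRadius

section CartesianDecomposition

variable {E : Type*} [NormedAddCommGroup E] [InnerProductSpace ℂ E] [CompleteSpace E]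
  (T : E →L[ℂ] E)

-- The minus sign: Mathlib's inner product is conjugate-linear in its first argument.
lemma inner_apply_self_eq_realPart_imaginaryPart (x : E) :
    inner ℂ (T x) x = inner ℂ ((ℜ T : E →L[ℂ] E) x) x - I * inner ℂ ((ℑ T : E →L[ℂ] E) x) x := by
  conv_lhs => rw [← realPart_add_I_smul_imaginaryPart T]
  simp only [add_apply, smul_apply, inner_add_left, inner_smul_left, conj_I]
  ring

lemma re_inner_apply_self_eq (x : E) :
    (inner ℂ (T x) x).re = (inner ℂ ((ℜ T : E →L[ℂ] E) x) x).re := by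
  have him : (inner ℂ ((ℑ T : E →L[ℂ] E) x) x).im = 0 :=
    (ℑ T).2.isSymmetric.im_inner_apply_self x
  simp [inner_apply_self_eq_realPart_imaginaryPart T x, him]

lemma im_inner_apply_self_eq (x : E) :
    (inner ℂ (T x) x).im = -(inner ℂ ((ℑ T : E →L[ℂ] E) x) x).re := by
  have him : (inner ℂ ((ℜ T : E →L[ℂ] E) x) x).im = 0 :=
    (ℜ T).2.isSymmetric.im_inner_apply_self x
  simp [inner_apply_self_eq_realPart_imaginaryPart T x, him]

lemma sq_norm_le_two_mul_sq_nr {S : E →L[ℂ] E} (hS : IsSelfAdjoint S)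
    (h : ∀ x, |(inner ℂ (S x) x).re| ≤ √2 * ‖inner ℂ (T x) x‖) : ‖S‖ ^ 2 ≤ 2 * nr T ^ 2 := by
  have hS : ‖S‖ ≤ √2 * nr T := by
    refine norm_le_of_abs_re_inner_le hS.isSymmetric (by positivity [nr_nonneg T]) fun x ↦ ?_
    rw [mul_assoc]
    exact (h x).trans (by gcongr; exact norm_inner_le_nr_mul_sq T x)
  calc ‖S‖ ^ 2 ≤ (√2 * nr T) ^ 2 := by gcongr
    _ = 2 * nr T ^ 2 := by rw [mul_pow, Real.sq_sqrt zero_le_two]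

lemma sq_norm_realPart_add_imaginaryPart_le :
    ‖(ℜ T + ℑ T : E →L[ℂ] E)‖ ^ 2 ≤ 2 * nr T ^ 2 := by
  refine sq_norm_le_two_mul_sq_nr T ((ℜ T).2.add (ℑ T).2) fun x ↦ ?_
  rw [add_apply, inner_add_left, add_re]
  have := abs_re_sub_im_le (inner ℂ (T x) x)
  rwa [re_inner_apply_self_eq, im_inner_apply_self_eq, sub_neg_eq_add] at this

lemma sq_norm_realPart_sub_imaginaryPart_le :
    ‖(ℜ T - ℑ T : E →L[ℂ] E)‖ ^ 2 ≤ 2 * nr T ^ 2 := by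
  refine sq_norm_le_two_mul_sq_nr T ((ℜ T).2.sub (ℑ T).2) fun x ↦ ?_
  rw [sub_apply, inner_sub_left, sub_re]
  have := abs_re_add_im_le (inner ℂ (T x) x)
  rwa [re_inner_apply_self_eq, im_inner_apply_self_eq, ← sub_eq_add_neg] at this

end CartesianDecomposition

theorem stmt_7 {H : Type*} [NormedAddCommGroup H] [InnerProductSpace ℂ H] [CompleteSpace H]
    (T : H →L[ℂ] H) :
    nr T ^ 2 ≥ (1 / 8) * ‖adjoint T * T + T * adjoint T‖
      + (1 / 8) * (‖(2 : ℂ)⁻¹ • (T + adjoint T) + (2 * Complex.I)⁻¹ • (T - adjoint T)‖ ^ 2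
                   + ‖(2 : ℂ)⁻¹ • (T + adjoint T) - (2 * Complex.I)⁻¹ • (T - adjoint T)‖ ^ 2)
      + (1 / 4) * |‖(2 : ℂ)⁻¹ • (T + adjoint T) + (2 * Complex.I)⁻¹ • (T - adjoint T)‖ ^ 2
                   - ‖(2 : ℂ)⁻¹ • (T + adjoint T) - (2 * Complex.I)⁻¹ • (T - adjoint T)‖ ^ 2| := by
  simp only [← star_eq_adjoint, ← realPart_apply_coe_complex, ← imaginaryPart_apply_coe_complex,
    star_mul_self_add_self_mul_star_eq_mul_self_add_mul_self]
  have hN := norm_mul_self_add_mul_self_le (ℜ T + ℑ T : H →L[ℂ] H) (ℜ T - ℑ T)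
  have hP := sq_norm_realPart_add_imaginaryPart_le T
  have hQ := sq_norm_realPart_sub_imaginaryPart_le T
  cases abs_cases (‖(ℜ T + ℑ T : H →L[ℂ] H)‖ ^ 2 - ‖(ℜ T - ℑ T : H →L[ℂ] H)‖ ^ 2) <;> linarith
end

section
/- For bounded linear operators B and C on a complex Hilbert space H and any t ∈ [0,1], w_e(B,C) ≤ ‖t²·B*B + (1−t)²·C*C‖^{1/2} + (1/√2)·(w((1−t)B + tC)² + w((1−t)B − tC)²)^{1/2}. -/
/-!
For a unit vector `x` put `b = |⟨Bx,x⟩|` and `c = |⟨Cx,x⟩|`. Splitting `(b, c)` as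
`(t b, (1-t) c) + ((1-t) b, t c)`, the triangle inequality in `ℝ²` gives
`√(b² + c²) ≤ √(t² b² + (1-t)² c²) + √((1-t)² b² + t² c²)`. The first root is at most
`√(t² ‖Bx‖² + (1-t)² ‖Cx‖²) = √(Re ⟨(t² B*B + (1-t)² C*C) x, x⟩)`, and by the parallelogram law
`2((1-t)² b² + t² c²) = |⟨((1-t)B + tC)x,x⟩|² + |⟨((1-t)B - tC)x,x⟩|²`, which the numerical
radii bound.
-/

open ContinuousLinearMap

theorem Real.sqrt_sq_add_sq_le_sqrt_add_sqrt (t b c : ℝ) :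
    √(b ^ 2 + c ^ 2) ≤
      √(t ^ 2 * b ^ 2 + (1 - t) ^ 2 * c ^ 2) + √((1 - t) ^ 2 * b ^ 2 + t ^ 2 * c ^ 2) := by
  have h := norm_add_le ((t * b : ℝ) + ((1 - t) * c : ℝ) * Complex.I)
    (((1 - t) * b : ℝ) + (t * c : ℝ) * Complex.I)
  have hsum : ((t * b : ℝ) + ((1 - t) * c : ℝ) * Complex.I)
      + (((1 - t) * b : ℝ) + (t * c : ℝ) * Complex.I) = (b : ℂ) + (c : ℂ) * Complex.I := by
    push_cast; ring
  rwa [hsum, Complex.norm_add_mul_I, Complex.norm_add_mul_I, Complex.norm_add_mul_I, mul_pow,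
    mul_pow, mul_pow, mul_pow] at h

theorem ContinuousLinearMap.norm_inner_apply_self_le_opNorm {𝕜 E : Type*} [RCLike 𝕜]
    [NormedAddCommGroup E] [InnerProductSpace 𝕜 E] (T : E →L[𝕜] E) {x : E} (hx : ‖x‖ = 1) :
    ‖(inner 𝕜 (T x) x : 𝕜)‖ ≤ ‖T‖ :=
  calc ‖(inner 𝕜 (T x) x : 𝕜)‖ ≤ ‖T x‖ * ‖x‖ := norm_inner_le_norm _ _
    _ ≤ ‖T‖ * ‖x‖ * ‖x‖ := by gcongr; exact T.le_opNorm x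
    _ = ‖T‖ := by rw [hx]; ring

section ComplexHilbert

variable {E : Type*} [NormedAddCommGroup E] [InnerProductSpace ℂ E]

theorem ContinuousLinearMap.norm_inner_add_sq_add_norm_inner_sub_sq (B C : E →L[ℂ] E)
    (s t : ℝ) (x : E) :
    ‖(inner ℂ ((s • B + t • C) x) x : ℂ)‖ ^ 2 + ‖(inner ℂ ((s • B - t • C) x) x : ℂ)‖ ^ 2
      = 2 * (s ^ 2 * ‖(inner ℂ (B x) x : ℂ)‖ ^ 2 + t ^ 2 * ‖(inner ℂ (C x) x : ℂ)‖ ^ 2) := by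
  have h := parallelogram_law_with_norm ℝ (s • (inner ℂ (B x) x : ℂ)) (t • inner ℂ (C x) x)
  simp only [norm_smul, mul_pow, Real.norm_eq_abs, sq_abs] at h
  simpa only [add_apply, sub_apply, smul_apply, inner_add_left, inner_sub_left,
    inner_smul_left_eq_smul] using h

theorem ContinuousLinearMap.smul_norm_sq_add_smul_norm_sq_le [CompleteSpace E]
    (B C : E →L[ℂ] E) (α β : ℝ) {x : E} (hx : ‖x‖ = 1) :
    α * ‖B x‖ ^ 2 + β * ‖C x‖ ^ 2 ≤ ‖α • (adjoint B * B) + β • (adjoint C * C)‖ := by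
  set A := α • (adjoint B * B) + β • (adjoint C * C)
  have hA : α * ‖B x‖ ^ 2 + β * ‖C x‖ ^ 2 = RCLike.re (inner ℂ (A x) x : ℂ) := by
    simp only [A, apply_norm_sq_eq_inner_adjoint_left, add_apply, smul_apply, inner_add_left,
      inner_smul_left_eq_smul, map_add, RCLike.smul_re, mul_apply_eq_comp]
    rfl
  calc α * ‖B x‖ ^ 2 + β * ‖C x‖ ^ 2 = RCLike.re (inner ℂ (A x) x : ℂ) := hA
    _ ≤ ‖(inner ℂ (A x) x : ℂ)‖ := RCLike.re_le_norm _
    _ ≤ ‖A‖ := A.norm_inner_apply_self_le_opNorm hx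

theorem norm_inner_apply_self_le_nr (T : E →L[ℂ] E) {x : E} (hx : ‖x‖ = 1) :
    ‖(inner ℂ (T x) x : ℂ)‖ ≤ nr T := by
  refine le_csSup ⟨‖T‖, ?_⟩ ⟨x, hx, rfl⟩
  rintro r ⟨y, hy, rfl⟩
  exact T.norm_inner_apply_self_le_opNorm hy

theorem er_le_of_forall_le {B C : E →L[ℂ] E} {M : ℝ} (hM : 0 ≤ M)
    (h : ∀ x : E, ‖x‖ = 1 →
      √(‖(inner ℂ (B x) x : ℂ)‖ ^ 2 + ‖(inner ℂ (C x) x : ℂ)‖ ^ 2) ≤ M) :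
    er B C ≤ M :=
  Real.sSup_le (by rintro r ⟨x, hx, rfl⟩; exact h x hx) hM

end ComplexHilbert

theorem stmt_8_general {H : Type*} [NormedAddCommGroup H] [InnerProductSpace ℂ H] [CompleteSpace H]
    (B C : H →L[ℂ] H) (t : ℝ) :
    er B C ≤ ‖t ^ 2 • (adjoint B * B) + (1 - t) ^ 2 • (adjoint C * C)‖ ^ ((1 : ℝ) / 2)
      + (1 / Real.sqrt 2) *
        (nr ((1 - t) • B + t • C) ^ 2 + nr ((1 - t) • B - t • C) ^ 2) ^ ((1 : ℝ) / 2) := by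
  rw [← Real.sqrt_eq_rpow, ← Real.sqrt_eq_rpow, one_div_mul_eq_div,
    ← Real.sqrt_div' _ zero_le_two]
  refine er_le_of_forall_le (by positivity) fun x hx => ?_
  have norm_inner_le (T : H →L[ℂ] H) : ‖(inner ℂ (T x) x : ℂ)‖ ≤ ‖T x‖ := by
    simpa [hx] using norm_inner_le_norm (𝕜 := ℂ) (T x) x
  refine (Real.sqrt_sq_add_sq_le_sqrt_add_sqrt t _ _).trans
    (add_le_add (Real.sqrt_le_sqrt ?_) (Real.sqrt_le_sqrt ?_))
  · refine le_trans ?_ (smul_norm_sq_add_smul_norm_sq_le B C _ _ hx)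
    gcongr <;> exact norm_inner_le _
  · have hsum := norm_inner_add_sq_add_norm_inner_sub_sq B C (1 - t) t x
    have h₁ := pow_le_pow_left₀ (norm_nonneg _)
      (norm_inner_apply_self_le_nr ((1 - t) • B + t • C) hx) 2
    have h₂ := pow_le_pow_left₀ (norm_nonneg _)
      (norm_inner_apply_self_le_nr ((1 - t) • B - t • C) hx) 2
    linarith

theorem stmt_8 {H : Type*} [NormedAddCommGroup H] [InnerProductSpace ℂ H] [CompleteSpace H]
    (B C : H →L[ℂ] H) (t : ℝ) (ht : t ∈ Set.Icc (0 : ℝ) 1) :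
    er B C ≤ ‖t ^ 2 • (adjoint B * B) + (1 - t) ^ 2 • (adjoint C * C)‖ ^ ((1 : ℝ) / 2)
      + (1 / Real.sqrt 2) *
        (nr ((1 - t) • B + t • C) ^ 2 + nr ((1 - t) • B - t • C) ^ 2) ^ ((1 : ℝ) / 2) :=
  stmt_8_general B C t
end

section
/- For bounded linear operators B and C on a complex Hilbert space H and 1 ≤ r ≤ 2, w_e(B,C)^{2r} ≤ (1/2)·‖(B*B + C*C)^r + (BB* + CC*)^r‖. -/
open ContinuousLinearMap

noncomputable def opow {E : Type*} [NormedAddCommGroup E] [InnerProductSpace ℂ E]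
    [CompleteSpace E] (A : E →L[ℂ] E) (r : ℝ) : E →L[ℂ] E :=
  cfc (fun x : ℝ => x ^ r) A

/-!
By the mixed Schwarz inequality, `|⟨T x, x⟩|² ≤ ‖T x‖ ‖T* x‖ ≤ (‖T x‖² + ‖T* x‖²) / 2` for a unit
vector `x`, so `|⟨B x, x⟩|² + |⟨C x, x⟩|² ≤ (⟨P x, x⟩ + ⟨Q x, x⟩) / 2` with `P = B*B + C*C` and
`Q = BB* + CC*`. Raising to the power `r ≥ 1`, convexity of `t ↦ t ^ r` and the Jensen-type
inequality `⟨P x, x⟩ ^ r ≤ ⟨P ^ r x, x⟩` bound the result by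
`⟨(P ^ r + Q ^ r) x, x⟩ / 2 ≤ ‖P ^ r + Q ^ r‖ / 2`.
-/

theorem Real.rpow_add_mul_sub_le_rpow {r a t : ℝ} (hr : 1 ≤ r) (ha : 0 ≤ a) (ht : 0 ≤ t) :
    a ^ r + r * a ^ (r - 1) * (t - a) ≤ t ^ r := by
  rcases ha.eq_or_lt with rfl | ha
  · rcases hr.eq_or_lt with rfl | hr
    · simp
    · rw [Real.zero_rpow (by linarith), Real.zero_rpow (by linarith)]
      simpa using Real.rpow_nonneg ht r
  · have bernoulli := one_add_mul_self_le_rpow_one_add (s := t / a - 1)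
      (by linarith [div_nonneg ht ha.le]) hr
    rw [add_sub_cancel, Real.div_rpow ht ha.le, le_div_iff₀ (by positivity)] at bernoulli
    refine le_trans (le_of_eq ?_) bernoulli
    rw [Real.rpow_sub_one ha.ne']
    field_simp

section
variable {H : Type*} [NormedAddCommGroup H] [InnerProductSpace ℂ H]

theorem ContinuousLinearMap.re_inner_apply_self_mono {T S : H →L[ℂ] H} (hTS : T ≤ S) (x : H) :
    RCLike.re (inner ℂ (T x) x) ≤ RCLike.re (inner ℂ (S x) x) := by
  have := ((le_def T S).mp hTS).re_inner_nonneg_left x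
  rwa [sub_apply, inner_sub_left, map_sub, sub_nonneg] at this

theorem ContinuousLinearMap.re_inner_apply_self_le_opNorm (T : H →L[ℂ] H) {x : H} (hx : ‖x‖ = 1) :
    RCLike.re (inner ℂ (T x) x) ≤ ‖T‖ :=
  calc RCLike.re (inner ℂ (T x) x) ≤ ‖T x‖ * ‖x‖ := re_inner_le_norm _ _
    _ ≤ ‖T‖ * ‖x‖ * ‖x‖ := by gcongr; exact le_opNorm T x
    _ = ‖T‖ := by rw [hx, mul_one, mul_one]

variable [CompleteSpace H]

theorem ContinuousLinearMap.re_inner_adjoint_mul_self_apply (T : H →L[ℂ] H) (x : H) :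
    RCLike.re (inner ℂ ((adjoint T * T) x) x) = ‖T x‖ ^ 2 :=
  (apply_norm_sq_eq_inner_adjoint_left T x).symm

theorem ContinuousLinearMap.re_inner_mul_adjoint_apply (T : H →L[ℂ] H) (x : H) :
    RCLike.re (inner ℂ ((T * adjoint T) x) x) = ‖adjoint T x‖ ^ 2 := by
  simpa using re_inner_adjoint_mul_self_apply (adjoint T) x

theorem ContinuousLinearMap.norm_inner_apply_self_sq_le (T : H →L[ℂ] H) (x : H) :
    ‖inner ℂ (T x) x‖ ^ 2 ≤ ‖x‖ ^ 2 * ((‖T x‖ ^ 2 + ‖adjoint T x‖ ^ 2) / 2) := by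
  have h₁ : ‖inner ℂ (T x) x‖ ≤ ‖T x‖ * ‖x‖ := norm_inner_le_norm _ _
  have h₂ : ‖inner ℂ (T x) x‖ ≤ ‖adjoint T x‖ * ‖x‖ := by
    rw [← norm_inner_symm, ← adjoint_inner_left]; exact norm_inner_le_norm _ _
  nlinarith [mul_le_mul h₁ h₂ (norm_nonneg _) (by positivity),
    mul_nonneg (sq_nonneg ‖x‖) (sq_nonneg (‖T x‖ - ‖adjoint T x‖))]

/-- Jensen's inequality for a function with a supporting line at `⟨P x, x⟩`: the functional
calculus is monotone, and on affine functions `⟨· x, x⟩` is evaluated exactly. -/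
theorem IsSelfAdjoint.map_re_inner_le_re_inner_cfc {P : H →L[ℂ] H} (hP : IsSelfAdjoint P)
    {f : ℝ → ℝ} (hf : ContinuousOn f (spectrum ℝ P)) {x : H} (hx : ‖x‖ = 1) {m : ℝ}
    (hm : ∀ t ∈ spectrum ℝ P,
      f (RCLike.re (inner ℂ (P x) x)) + m * (t - RCLike.re (inner ℂ (P x) x)) ≤ f t) :
    f (RCLike.re (inner ℂ (P x) x)) ≤ RCLike.re (inner ℂ (cfc f P x) x) := by
  set a := RCLike.re (inner ℂ (P x) x)
  have hline :
      cfc (fun t => (f a - m * a) + m * t) P = algebraMap ℝ _ (f a - m * a) + m • P := by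
    rw [cfc_const_add _ _ P, cfc_const_mul _ _ P, cfc_id' ℝ P]
  have hle := re_inner_apply_self_mono (cfc_mono (a := P) (f := fun t => (f a - m * a) + m * t)
    (fun t ht => by linarith [hm t ht]) (by fun_prop) hf) x
  rw [hline] at hle
  refine le_trans (le_of_eq ?_) hle
  simp [Algebra.algebraMap_eq_smul_one, hx, a]

theorem rpow_re_inner_le_re_inner_opow {P : H →L[ℂ] H} (hP : 0 ≤ P) {r : ℝ} (hr : 1 ≤ r)
    {x : H} (hx : ‖x‖ = 1) :
    RCLike.re (inner ℂ (P x) x) ^ r ≤ RCLike.re (inner ℂ (opow P r x) x) :=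
  hP.isSelfAdjoint.map_re_inner_le_re_inner_cfc
    (Real.continuous_rpow_const (by linarith)).continuousOn hx
    fun _ ht => Real.rpow_add_mul_sub_le_rpow hr
      (((nonneg_iff_isPositive P).mp hP).re_inner_nonneg_left x) (spectrum_nonneg_of_nonneg hP ht)

end

theorem Real.sSup_rpow_le {S : Set ℝ} {p K : ℝ} (hp : 0 < p) (hK : 0 ≤ K)
    (hS : ∀ s ∈ S, 0 ≤ s ∧ s ^ p ≤ K) : sSup S ^ p ≤ K := by
  have hsup : sSup S ≤ K ^ p⁻¹ := Real.sSup_le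
    (fun s hs => (Real.le_rpow_inv_iff_of_pos (hS s hs).1 hK hp).mpr (hS s hs).2) (by positivity)
  calc sSup S ^ p ≤ (K ^ p⁻¹) ^ p :=
        Real.rpow_le_rpow (Real.sSup_nonneg fun s hs => (hS s hs).1) hsup hp.le
    _ = K := Real.rpow_inv_rpow hK hp.ne'

theorem Real.add_div_two_rpow_le {p q r : ℝ} (hr : 1 ≤ r) (hp : 0 ≤ p) (hq : 0 ≤ q) :
    ((p + q) / 2) ^ r ≤ (p ^ r + q ^ r) / 2 := by
  have := (convexOn_rpow hr).2 (Set.mem_Ici.mpr hp) (Set.mem_Ici.mpr hq)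
    (by norm_num : (0 : ℝ) ≤ 1 / 2) (by norm_num : (0 : ℝ) ≤ 1 / 2) (by norm_num)
  simp only [smul_eq_mul] at this
  calc ((p + q) / 2) ^ r = (1 / 2 * p + 1 / 2 * q) ^ r := by ring_nf
    _ ≤ 1 / 2 * p ^ r + 1 / 2 * q ^ r := this
    _ = (p ^ r + q ^ r) / 2 := by ring

theorem stmt_13_general {H : Type*} [NormedAddCommGroup H] [InnerProductSpace ℂ H] [CompleteSpace H]
    (B C : H →L[ℂ] H) (r : ℝ) (hr : 1 ≤ r) :
    (er B C) ^ (2 * r)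
      ≤ (1 / 2) * ‖opow (adjoint B * B + adjoint C * C) r
                   + opow (B * adjoint B + C * adjoint C) r‖ := by
  set P := adjoint B * B + adjoint C * C
  set Q := B * adjoint B + C * adjoint C
  have hP : 0 ≤ P := add_nonneg (star_mul_self_nonneg B) (star_mul_self_nonneg C)
  have hQ : 0 ≤ Q := add_nonneg (mul_star_self_nonneg B) (mul_star_self_nonneg C)
  refine Real.sSup_rpow_le (by positivity) (by positivity) ?_
  rintro _ ⟨x, hx, rfl⟩
  have hB := B.norm_inner_apply_self_sq_le x
  have hC := C.norm_inner_apply_self_sq_le x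
  rw [hx, one_pow, one_mul] at hB hC
  have hPx : RCLike.re (inner ℂ (P x) x) = ‖B x‖ ^ 2 + ‖C x‖ ^ 2 := by
    simp only [P, add_apply, inner_add_left, map_add, re_inner_adjoint_mul_self_apply]
  have hQx : RCLike.re (inner ℂ (Q x) x) = ‖adjoint B x‖ ^ 2 + ‖adjoint C x‖ ^ 2 := by
    simp only [Q, add_apply, inner_add_left, map_add, re_inner_mul_adjoint_apply]
  refine ⟨Real.sqrt_nonneg _, ?_⟩
  rw [Real.sqrt_eq_rpow, ← Real.rpow_mul (by positivity), show 1 / 2 * (2 * r) = r by ring]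
  calc _ ≤ ((RCLike.re (inner ℂ (P x) x) + RCLike.re (inner ℂ (Q x) x)) / 2) ^ r :=
        Real.rpow_le_rpow (by positivity) (by rw [hPx, hQx]; linarith) (by linarith)
    _ ≤ (RCLike.re (inner ℂ (P x) x) ^ r + RCLike.re (inner ℂ (Q x) x) ^ r) / 2 :=
        Real.add_div_two_rpow_le hr (by rw [hPx]; positivity) (by rw [hQx]; positivity)
    _ ≤ (RCLike.re (inner ℂ (opow P r x) x) + RCLike.re (inner ℂ (opow Q r x) x)) / 2 := by
        gcongr
        exacts [rpow_re_inner_le_re_inner_opow hP hr hx, rpow_re_inner_le_re_inner_opow hQ hr hx]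
    _ = RCLike.re (inner ℂ ((opow P r + opow Q r) x) x) / 2 := by
        rw [add_apply, inner_add_left, map_add]
    _ ≤ 1 / 2 * ‖opow P r + opow Q r‖ := by
        linarith [re_inner_apply_self_le_opNorm (opow P r + opow Q r) hx]

theorem stmt_13 {H : Type*} [NormedAddCommGroup H] [InnerProductSpace ℂ H] [CompleteSpace H]
    (B C : H →L[ℂ] H) (r : ℝ) (hr : 1 ≤ r) (hr2 : r ≤ 2) :
    (er B C) ^ (2 * r)
      ≤ (1 / 2) * ‖opow (adjoint B * B + adjoint C * C) r
                   + opow (B * adjoint B + C * adjoint C) r‖ :=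
  stmt_13_general B C r hr
end
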